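/- arXiv:2604.04173 — 4 statements merged into one kernel-verified Lean document; each statement's English description precedes it below -/
import Mathlib

section
/- Let B be a symmetric bilinear form on ℝ⁴, and for u ∈ ℝ⁴ let J(u) ∈ ℝ⁴ be the unique vector satisfying η(J(u), w) = −B(u, w) for all w ∈ ℝ⁴. Then B(u, u′) ≥ 0 for every pair u, u′ ∈ T₊ if and only if, for every u ∈ T₊, the vector J(u) lies in the closed future cone, i.e. η(J(u), J(u)) ≤ 0 and (J(u))₀ ≥ 0. -/
/-- The Minkowski form `η(u,v) = −u₀v₀ + u₁v₁ + u₂v₂ + u₃v₃` on `ℝ⁴`. -/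
def eta (u v : Fin 4 → ℝ) : ℝ := -(u 0 * v 0) + u 1 * v 1 + u 2 * v 2 + u 3 * v 3

/-- The set of future-directed unit timelike vectors. -/
def Tplus : Set (Fin 4 → ℝ) := {u | eta u u = -1 ∧ 0 < u 0}

lemma mem_Tplus (x1 x2 x3 : ℝ) :
    (![Real.sqrt (1 + x1^2 + x2^2 + x3^2), x1, x2, x3] : Fin 4 → ℝ) ∈ Tplus := by
  have h0 : (0:ℝ) < 1 + x1^2 + x2^2 + x3^2 := by positivity
  have hs : Real.sqrt (1 + x1^2 + x2^2 + x3^2) ^ 2 = 1 + x1^2 + x2^2 + x3^2 :=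
    Real.sq_sqrt h0.le
  constructor
  · show eta _ _ = -1
    simp only [eta, Matrix.cons_val_zero, Matrix.cons_val_one, Matrix.head_cons,
      Matrix.cons_val_two, Matrix.tail_cons, Matrix.cons_val_three]
    nlinarith [hs]
  · show (0:ℝ) < _
    simpa using Real.sqrt_pos.mpr h0

lemma key1 (v : Fin 4 → ℝ) (h : ∀ u' ∈ Tplus, eta v u' ≤ 0) :
    eta v v ≤ 0 ∧ 0 ≤ v 0 := by
  have h000 := h _ (mem_Tplus 0 0 0)
  have hv0 : 0 ≤ v 0 := by
    simp only [eta, Matrix.cons_val_zero, Matrix.cons_val_one, Matrix.head_cons,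
      Matrix.cons_val_two, Matrix.tail_cons, Matrix.cons_val_three] at h000
    nlinarith [h000, Real.sq_sqrt (by norm_num : (0:ℝ) ≤ 1 + 0^2 + 0^2 + 0^2),
      Real.sqrt_nonneg (1 + (0:ℝ)^2 + 0^2 + 0^2),
      Real.sqrt_pos.mpr (by norm_num : (0:ℝ) < 1 + 0^2 + 0^2 + 0^2)]
  refine ⟨?_, hv0⟩
  by_contra hlt
  push_neg at hlt
  set r2 : ℝ := v 1 ^ 2 + v 2 ^ 2 + v 3 ^ 2 with hr2
  have hd : 0 < r2 - v 0 ^ 2 := by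
    simp only [eta] at hlt; nlinarith
  have hr2pos : 0 < r2 := by nlinarith [sq_nonneg (v 0)]
  set c : ℝ := Real.sqrt ((v 0 ^ 2 + 1) / (r2 * (r2 - v 0 ^ 2))) with hc
  have hcnn : 0 ≤ c := Real.sqrt_nonneg _
  have hc2 : c ^ 2 = (v 0 ^ 2 + 1) / (r2 * (r2 - v 0 ^ 2)) := by
    apply Real.sq_sqrt; positivity
  have hc2r2 : c ^ 2 * r2 * (r2 - v 0 ^ 2) = v 0 ^ 2 + 1 := by
    rw [hc2]; field_simp
  have hu := h _ (mem_Tplus (c * v 1) (c * v 2) (c * v 3))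
  set s : ℝ := Real.sqrt (1 + (c * v 1)^2 + (c * v 2)^2 + (c * v 3)^2) with hsdef
  have hsnn : 0 ≤ s := Real.sqrt_nonneg _
  have hs2 : s ^ 2 = 1 + (c * v 1)^2 + (c * v 2)^2 + (c * v 3)^2 :=
    Real.sq_sqrt (by positivity)
  simp only [eta, Matrix.cons_val_zero, Matrix.cons_val_one, Matrix.head_cons,
    Matrix.cons_val_two, Matrix.tail_cons, Matrix.cons_val_three] at hu
  -- hu : -(v 0 * s) + v 1 * (c * v 1) + v 2 * (c * v 2) + v 3 * (c * v 3) ≤ 0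
  have hcr : c * r2 ≤ v 0 * s := by nlinarith
  have hsq : (c * r2) ^ 2 ≤ (v 0 * s) ^ 2 := by
    have h1 : 0 ≤ c * r2 := by positivity
    nlinarith
  have hv2s : v 0 ^ 2 * s ^ 2 = v 0 ^ 2 * (1 + c ^ 2 * r2) := by rw [hs2, hr2]; ring
  nlinarith [hsq, hv2s, hc2r2]

lemma key2 (v : Fin 4 → ℝ) (h1 : eta v v ≤ 0) (h2 : 0 ≤ v 0) :
    ∀ u' ∈ Tplus, eta v u' ≤ 0 := by
  rintro u' ⟨hu, hu0⟩
  simp only [eta] at h1 hu ⊢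
  nlinarith [sq_nonneg (v 1 * u' 2 - v 2 * u' 1), sq_nonneg (v 1 * u' 3 - v 3 * u' 1),
    sq_nonneg (v 2 * u' 3 - v 3 * u' 2),
    sq_nonneg (v 0 * u' 0 - (v 1 * u' 1 + v 2 * u' 2 + v 3 * u' 3)),
    mul_nonneg h2 hu0.le,
    sq_nonneg (v 0 - u' 0), sq_nonneg (v 0 + u' 0)]

/-- For a symmetric bilinear form `B` on `ℝ⁴`, with `J(u)` defined by
`η(J(u), w) = −B(u, w)`, one has `B(u, u′) ≥ 0` for all `u, u′ ∈ T₊` iff for every `u ∈ T₊`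
the vector `J(u)` lies in the closed future cone. -/
theorem stmt_2 (B : (Fin 4 → ℝ) →ₗ[ℝ] (Fin 4 → ℝ) →ₗ[ℝ] ℝ)
    (hsymm : ∀ u v, B u v = B v u)
    (J : (Fin 4 → ℝ) → (Fin 4 → ℝ))
    (hJ : ∀ u w, eta (J u) w = -(B u w)) :
    (∀ u ∈ Tplus, ∀ u' ∈ Tplus, 0 ≤ B u u') ↔
      (∀ u ∈ Tplus, eta (J u) (J u) ≤ 0 ∧ 0 ≤ J u 0) := by
  constructor
  · intro hB u hu
    apply key1
    intro u' hu'
    rw [hJ]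
    linarith [hB u hu u' hu']
  · intro hJc u hu u' hu'
    have := key2 (J u) (hJc u hu).1 (hJc u hu).2 u' hu'
    rw [hJ] at this
    linarith
end

section
/- For every pair of vectors u, u′ ∈ T₊ there exist χ ∈ ℝ and vectors e₀, e₁, e₂, e₃ ∈ ℝ⁴ forming an η-orthonormal basis (that is, η(e₀,e₀) = −1, η(e_i,e_i) = 1 for i = 1,2,3, η(e_a,e_b) = 0 for a ≠ b) with e₀ future-directed (i.e., (e₀)₀ > 0), such that u = (cosh χ)·e₀ + (sinh χ)·e₁ and u′ = (cosh χ)·e₀ − (sinh χ)·e₁. -/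
/-! ### Auxiliary lemmas -/

lemma eta_comm (x y : Fin 4 → ℝ) : eta x y = eta y x := by simp [eta]; ring
lemma eta_smul_left (r : ℝ) (x y : Fin 4 → ℝ) : eta (r • x) y = r * eta x y := by simp [eta]; ring
lemma eta_smul_right (r : ℝ) (x y : Fin 4 → ℝ) : eta x (r • y) = r * eta x y := by simp [eta]; ring
lemma eta_add_left (x y z : Fin 4 → ℝ) : eta (x + y) z = eta x z + eta y z := by simp [eta]; ring
lemma eta_add_right (x y z : Fin 4 → ℝ) : eta x (y + z) = eta x y + eta x z := by simp [eta]; ring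
lemma eta_sub_left (x y z : Fin 4 → ℝ) : eta (x - y) z = eta x z - eta y z := by simp [eta]; ring
lemma eta_sub_right (x y z : Fin 4 → ℝ) : eta x (y - z) = eta x y - eta x z := by simp [eta]; ring

/-- Minkowski–Hodge dual of three vectors: it is automatically `η`-orthogonal to each. -/
noncomputable def mdual (a b c : Fin 4 → ℝ) : Fin 4 → ℝ :=
  ![ -(a 1*(b 2*c 3 - b 3*c 2) - a 2*(b 1*c 3 - b 3*c 1) + a 3*(b 1*c 2 - b 2*c 1)),
     -(a 0*(b 2*c 3 - b 3*c 2) - a 2*(b 0*c 3 - b 3*c 0) + a 3*(b 0*c 2 - b 2*c 0)),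
     (a 0*(b 1*c 3 - b 3*c 1) - a 1*(b 0*c 3 - b 3*c 0) + a 3*(b 0*c 1 - b 1*c 0)),
     -(a 0*(b 1*c 2 - b 2*c 1) - a 1*(b 0*c 2 - b 2*c 0) + a 2*(b 0*c 1 - b 1*c 0)) ]

lemma mdual_orth_a (a b c : Fin 4 → ℝ) : eta (mdual a b c) a = 0 := by
  simp [mdual, eta]; ring

lemma mdual_orth_b (a b c : Fin 4 → ℝ) : eta (mdual a b c) b = 0 := by
  simp [mdual, eta]; ring

lemma mdual_orth_c (a b c : Fin 4 → ℝ) : eta (mdual a b c) c = 0 := by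
  simp [mdual, eta]; ring

/-- The norm identity: `η(d,d) = −det(Gram matrix)`. -/
lemma mdual_norm (a b c : Fin 4 → ℝ) : eta (mdual a b c) (mdual a b c) =
    -(eta a a * (eta b b * eta c c - eta b c * eta c b)
      - eta a b * (eta b a * eta c c - eta b c * eta c a)
      + eta a c * (eta b a * eta c b - eta b b * eta c a)) := by
  simp [mdual, eta]; ring

lemma key_ineq (e x : Fin 4 → ℝ) (he : eta e e = -1) (hx : eta e x = 0) :
    x 0 ^ 2 * (1 + (e 1 ^ 2 + e 2 ^ 2 + e 3 ^ 2)) ≤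
      (e 1 ^ 2 + e 2 ^ 2 + e 3 ^ 2) * (x 1 ^ 2 + x 2 ^ 2 + x 3 ^ 2) := by
  simp only [eta] at he hx
  have hP : e 0 * x 0 = e 1 * x 1 + e 2 * x 2 + e 3 * x 3 := by linarith
  have hCS : (e 0 * x 0) ^ 2 ≤
      (e 1 ^ 2 + e 2 ^ 2 + e 3 ^ 2) * (x 1 ^ 2 + x 2 ^ 2 + x 3 ^ 2) := by
    rw [hP]
    nlinarith [sq_nonneg (e 1 * x 2 - e 2 * x 1), sq_nonneg (e 1 * x 3 - e 3 * x 1),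
      sq_nonneg (e 2 * x 3 - e 3 * x 2)]
  have he' : e 0 ^ 2 = 1 + (e 1 ^ 2 + e 2 ^ 2 + e 3 ^ 2) := by nlinarith
  nlinarith [hCS, he', sq_nonneg (x 0)]

/-- `η` is positive semidefinite on the orthocomplement of a unit timelike vector. -/
lemma eta_semidef (e x : Fin 4 → ℝ) (he : eta e e = -1) (hx : eta e x = 0) :
    0 ≤ eta x x := by
  have h1 := key_ineq e x he hx
  have hS : (0:ℝ) ≤ e 1 ^ 2 + e 2 ^ 2 + e 3 ^ 2 := by positivity
  have hp : (0:ℝ) ≤ x 1 ^ 2 + x 2 ^ 2 + x 3 ^ 2 := by positivity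
  simp only [eta]
  nlinarith [h1, hS, hp, sq_nonneg (x 0)]

/-- A null vector orthogonal to a unit timelike vector is zero. -/
lemma eta_null_eq_zero (e x : Fin 4 → ℝ) (he : eta e e = -1) (hx : eta e x = 0)
    (hxx : eta x x = 0) : x = 0 := by
  have h1 := key_ineq e x he hx
  have hS : (0:ℝ) ≤ e 1 ^ 2 + e 2 ^ 2 + e 3 ^ 2 := by positivity
  simp only [eta] at hxx
  have h0 : x 0 = 0 := by nlinarith [h1, hS, sq_nonneg (x 0)]
  have h123 : x 1 ^ 2 + x 2 ^ 2 + x 3 ^ 2 = 0 := by nlinarith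
  funext i
  fin_cases i
  · exact h0
  all_goals (simp; nlinarith [sq_nonneg (x 1), sq_nonneg (x 2), sq_nonneg (x 3)])

/-- Reverse Cauchy–Schwarz for future unit timelike vectors. -/
lemma eta_le_neg_one (u u' : Fin 4 → ℝ) (hu : eta u u = -1) (hu0 : 0 < u 0)
    (hu' : eta u' u' = -1) (hu'0 : 0 < u' 0) : eta u u' ≤ -1 := by
  simp only [eta] at *
  have hCS : (u 1 * u' 1 + u 2 * u' 2 + u 3 * u' 3) ^ 2 ≤
      (u 1 ^ 2 + u 2 ^ 2 + u 3 ^ 2) * (u' 1 ^ 2 + u' 2 ^ 2 + u' 3 ^ 2) := by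
    nlinarith [sq_nonneg (u 1 * u' 2 - u 2 * u' 1), sq_nonneg (u 1 * u' 3 - u 3 * u' 1),
      sq_nonneg (u 2 * u' 3 - u 3 * u' 2)]
  have h2 : (u 0 * u' 0) ^ 2 ≥ (1 + (u 1 * u' 1 + u 2 * u' 2 + u 3 * u' 3)) ^ 2 := by
    nlinarith [hCS, sq_nonneg (u 1 - u' 1), sq_nonneg (u 2 - u' 2), sq_nonneg (u 3 - u' 3)]
  have h3 : 0 < u 0 * u' 0 := mul_pos hu0 hu'0
  nlinarith [h2, h3, sq_nonneg (u 0 * u' 0 - (1 + (u 1 * u' 1 + u 2 * u' 2 + u 3 * u' 3)))]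

lemma eta_normalize (y : Fin 4 → ℝ) (ht : 0 < eta y y) :
    eta ((Real.sqrt (eta y y))⁻¹ • y) ((Real.sqrt (eta y y))⁻¹ • y) = 1 := by
  rw [eta_smul_left, eta_smul_right]
  rw [← Real.sqrt_mul_self ht.le]
  have h : Real.sqrt (eta y y) ≠ 0 := ne_of_gt (Real.sqrt_pos.mpr ht)
  field_simp
  rw [Real.sq_sqrt (Real.sqrt_nonneg _)]

/-- Given an orthonormal timelike/spacelike pair, there is a positive-norm vector
orthogonal to both. -/
lemma exists_orth_pos (e0 e1 : Fin 4 → ℝ) (h00 : eta e0 e0 = -1) (h11 : eta e1 e1 = 1)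
    (h01 : eta e0 e1 = 0) : ∃ y, eta e0 y = 0 ∧ eta e1 y = 0 ∧ 0 < eta y y := by
  set f1 : Fin 4 → ℝ := ![0,1,0,0] with hf1
  set f2 : Fin 4 → ℝ := ![0,0,1,0] with hf2
  set y1 : Fin 4 → ℝ := f1 + (e0 1) • e0 - (e1 1) • e1 with hy1
  set y2 : Fin 4 → ℝ := f2 + (e0 2) • e0 - (e1 2) • e1 with hy2
  have hef1 : eta e0 f1 = e0 1 := by simp [hf1, eta]
  have hef2 : eta e0 f2 = e0 2 := by simp [hf2, eta]
  have he1f1 : eta e1 f1 = e1 1 := by simp [hf1, eta]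
  have he1f2 : eta e1 f2 = e1 2 := by simp [hf2, eta]
  have h0y1 : eta e0 y1 = 0 := by
    rw [hy1, eta_sub_right, eta_add_right, eta_smul_right, eta_smul_right, hef1, h00, h01]; ring
  have h0y2 : eta e0 y2 = 0 := by
    rw [hy2, eta_sub_right, eta_add_right, eta_smul_right, eta_smul_right, hef2, h00, h01]; ring
  have h1y1 : eta e1 y1 = 0 := by
    rw [hy1, eta_sub_right, eta_add_right, eta_smul_right, eta_smul_right, he1f1, h11,
      eta_comm e1 e0, h01]; ring
  have h1y2 : eta e1 y2 = 0 := by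
    rw [hy2, eta_sub_right, eta_add_right, eta_smul_right, eta_smul_right, he1f2, h11,
      eta_comm e1 e0, h01]; ring
  by_cases hp1 : 0 < eta y1 y1
  · exact ⟨y1, h0y1, h1y1, hp1⟩
  by_cases hp2 : 0 < eta y2 y2
  · exact ⟨y2, h0y2, h1y2, hp2⟩
  exfalso
  have hz1 : y1 = 0 := eta_null_eq_zero e0 y1 h00 h0y1
    (le_antisymm (not_lt.mp hp1) (eta_semidef e0 y1 h00 h0y1))
  have hz2 : y2 = 0 := eta_null_eq_zero e0 y2 h00 h0y2
    (le_antisymm (not_lt.mp hp2) (eta_semidef e0 y2 h00 h0y2))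
  have hq1 : eta y1 f1 = 0 := by rw [hz1]; simp [eta]
  have hq2 : eta y2 f2 = 0 := by rw [hz2]; simp [eta]
  have hq12 : eta y1 f2 = 0 := by rw [hz1]; simp [eta]
  have e11 : eta f1 f1 = 1 := by simp [hf1, eta]
  have e22 : eta f2 f2 = 1 := by simp [hf2, eta]
  have e12 : eta f1 f2 = 0 := by simp [hf1, hf2, eta]
  rw [hy1, eta_sub_left, eta_add_left, eta_smul_left, eta_smul_left, e11, hef1, he1f1] at hq1
  rw [hy2, eta_sub_left, eta_add_left, eta_smul_left, eta_smul_left, e22, hef2, he1f2] at hq2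
  rw [hy1, eta_sub_left, eta_add_left, eta_smul_left, eta_smul_left, e12, hef2, he1f2] at hq12
  have hA : e1 1 * e1 1 = 1 + e0 1 * e0 1 := by linarith
  have hB : e1 2 * e1 2 = 1 + e0 2 * e0 2 := by linarith
  have hC : e1 1 * e1 2 = e0 1 * e0 2 := by linarith
  have hD : (1 + e0 1 * e0 1) * (1 + e0 2 * e0 2) = (e0 1 * e0 2) ^ 2 := by
    calc (1 + e0 1 * e0 1) * (1 + e0 2 * e0 2) = (e1 1 * e1 1) * (e1 2 * e1 2) := by
          rw [hA, hB]
      _ = (e1 1 * e1 2) ^ 2 := by ring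
      _ = (e0 1 * e0 2) ^ 2 := by rw [hC]
  nlinarith [hD, sq_nonneg (e0 1), sq_nonneg (e0 2)]

/-- Complete an orthonormal timelike/spacelike pair to a full orthonormal tetrad. -/
lemma tetrad (e0 e1 : Fin 4 → ℝ) (h00 : eta e0 e0 = -1) (h11 : eta e1 e1 = 1)
    (h01 : eta e0 e1 = 0) :
    ∃ e2 e3, eta e2 e2 = 1 ∧ eta e3 e3 = 1 ∧ eta e0 e2 = 0 ∧ eta e0 e3 = 0 ∧
      eta e1 e2 = 0 ∧ eta e1 e3 = 0 ∧ eta e2 e3 = 0 := by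
  obtain ⟨y, h0y, h1y, hyy⟩ := exists_orth_pos e0 e1 h00 h11 h01
  set e2 : Fin 4 → ℝ := (Real.sqrt (eta y y))⁻¹ • y with he2
  have h22 : eta e2 e2 = 1 := eta_normalize y hyy
  have h02 : eta e0 e2 = 0 := by rw [he2, eta_smul_right, h0y, mul_zero]
  have h12 : eta e1 e2 = 0 := by rw [he2, eta_smul_right, h1y, mul_zero]
  set e3 : Fin 4 → ℝ := mdual e0 e1 e2 with he3
  have h03 : eta e0 e3 = 0 := by rw [eta_comm, he3]; exact mdual_orth_a e0 e1 e2
  have h13 : eta e1 e3 = 0 := by rw [eta_comm, he3]; exact mdual_orth_b e0 e1 e2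
  have h23 : eta e2 e3 = 0 := by rw [eta_comm, he3]; exact mdual_orth_c e0 e1 e2
  have h33 : eta e3 e3 = 1 := by
    rw [he3, mdual_norm, h00, h11, h22, h01, h02, h12,
      eta_comm e1 e0, h01, eta_comm e2 e0, h02, eta_comm e2 e1, h12]
    ring
  exact ⟨e2, e3, h22, h33, h02, h03, h12, h13, h23⟩

lemma build (e0 e1 e2 e3 : Fin 4 → ℝ) (h00 : eta e0 e0 = -1) (h11 : eta e1 e1 = 1)
    (h22 : eta e2 e2 = 1) (h33 : eta e3 e3 = 1) (h01 : eta e0 e1 = 0) (h02 : eta e0 e2 = 0)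
    (h03 : eta e0 e3 = 0) (h12 : eta e1 e2 = 0) (h13 : eta e1 e3 = 0) (h23 : eta e2 e3 = 0) :
    ∀ a b : Fin 4, eta (![e0,e1,e2,e3] a) (![e0,e1,e2,e3] b) =
      if a = b then (if a = 0 then (-1 : ℝ) else 1) else 0 := by
  intro a b
  fin_cases a <;> fin_cases b <;>
    simp [Matrix.cons_val_zero, Matrix.cons_val_one, Matrix.head_cons, Fin.ext_iff] <;>
    first
      | assumption
      | (rw [eta_comm]; assumption)

/-- For every pair `u, u′ ∈ T₊` there exist `χ ∈ ℝ` and an η-orthonormal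
basis `e₀, e₁, e₂, e₃` with `e₀` future-directed such that
`u = cosh χ · e₀ + sinh χ · e₁` and `u′ = cosh χ · e₀ − sinh χ · e₁`. -/
theorem stmt_4 (u u' : Fin 4 → ℝ) (hu : u ∈ Tplus) (hu' : u' ∈ Tplus) :
    ∃ (χ : ℝ) (e : Fin 4 → (Fin 4 → ℝ)),
      (∀ a b : Fin 4, eta (e a) (e b) =
        if a = b then (if a = 0 then (-1 : ℝ) else 1) else 0) ∧
      0 < e 0 0 ∧
      u = Real.cosh χ • e 0 + Real.sinh χ • e 1 ∧
      u' = Real.cosh χ • e 0 - Real.sinh χ • e 1 := by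
  obtain ⟨huu, hu0⟩ := hu
  obtain ⟨hu'u', hu'0⟩ := hu'
  set s : ℝ := -(eta u u') with hs_def
  have hs : 1 ≤ s := by
    have := eta_le_neg_one u u' huu hu0 hu'u' hu'0
    simp [hs_def]; linarith
  have huv : eta u u' = -s := by simp [hs_def]
  have hvu : eta u' u = -s := by rw [eta_comm]; exact huv
  set σ : ℝ := Real.sqrt ((s - 1) / 2) with hσ_def
  set c : ℝ := Real.sqrt ((1 + s) / 2) with hc_def
  have hσ2 : σ ^ 2 = (s - 1) / 2 := Real.sq_sqrt (by linarith)
  have hc2 : c ^ 2 = (1 + s) / 2 := Real.sq_sqrt (by linarith)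
  have hcpos : 0 < c := Real.sqrt_pos.mpr (by linarith)
  set χ : ℝ := Real.arsinh σ with hχ_def
  have hsinh : Real.sinh χ = σ := Real.sinh_arsinh σ
  have hcosh : Real.cosh χ = c := by
    rw [hχ_def, Real.cosh_arsinh, hσ2, hc_def]
    congr 1
    ring
  by_cases hs1 : s = 1
  · -- degenerate case : u = u'
    have huv1 : eta u u' = -1 := by rw [huv, hs1]
    have hne : eta u (u - u') = 0 := by rw [eta_sub_right, huu, huv1]; ring
    have hnn : eta (u - u') (u - u') = 0 := by
      rw [eta_sub_left, eta_sub_right, eta_sub_right, huu, huv1, hvu, hu'u', hs1]; ring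
    have heq : u = u' := by
      have := eta_null_eq_zero u (u - u') huu hne hnn
      exact sub_eq_zero.mp this
    have hσ0 : σ = 0 := by rw [hσ_def, hs1]; simp
    have hc1 : c = 1 := by rw [hc_def, hs1]; norm_num
    set y : Fin 4 → ℝ := ![0,1,0,0] + (u 1) • u with hy_def
    have huy : eta u y = 0 := by
      rw [hy_def, eta_add_right, eta_smul_right, huu]
      simp [eta]
    have hyy : eta y y = 1 + (u 1) ^ 2 := by
      rw [hy_def, eta_add_left, eta_smul_left, eta_add_right, eta_smul_right,
        eta_add_right, eta_smul_right, huu]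
      have h2 : eta u ![(0:ℝ),1,0,0] = u 1 := by simp [eta]
      have h3 : eta ![(0:ℝ),1,0,0] u = u 1 := by simp [eta]
      have h4 : eta ![(0:ℝ),1,0,0] ![(0:ℝ),1,0,0] = 1 := by simp [eta]
      rw [h2, h3, h4]
      ring
    have hyypos : 0 < eta y y := by rw [hyy]; positivity
    set e1 : Fin 4 → ℝ := (Real.sqrt (eta y y))⁻¹ • y with he1
    have h11 : eta e1 e1 = 1 := eta_normalize y hyypos
    have h01 : eta u e1 = 0 := by rw [he1, eta_smul_right, huy, mul_zero]
    obtain ⟨e2, e3, h22, h33, h02, h03, h12, h13, h23⟩ := tetrad u e1 huu h11 h01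
    refine ⟨χ, ![u, e1, e2, e3], build u e1 e2 e3 huu h11 h22 h33 h01 h02 h03 h12 h13 h23,
      ?_, ?_, ?_⟩
    · simpa using hu0
    · rw [hcosh, hsinh, hσ0, hc1]; simp
    · rw [hcosh, hsinh, hσ0, hc1, heq]; simp
  · -- generic case
    have hslt : 1 < s := lt_of_le_of_ne hs (Ne.symm hs1)
    have hσpos : 0 < σ := Real.sqrt_pos.mpr (by linarith)
    set e0 : Fin 4 → ℝ := (2 * c)⁻¹ • (u + u') with he0
    set e1 : Fin 4 → ℝ := (2 * σ)⁻¹ • (u - u') with he1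
    have hplus : eta (u + u') (u + u') = -2 - 2 * s := by
      rw [eta_add_left, eta_add_right, eta_add_right, huu, huv, hvu, hu'u']; ring
    have hminus : eta (u - u') (u - u') = 2 * s - 2 := by
      rw [eta_sub_left, eta_sub_right, eta_sub_right, huu, huv, hvu, hu'u']; ring
    have hmix : eta (u + u') (u - u') = 0 := by
      rw [eta_add_left, eta_sub_right, eta_sub_right, huu, huv, hvu, hu'u']; ring
    have hcne : (2 * c) ≠ 0 := by positivity
    have hσne : (2 * σ) ≠ 0 := by positivity
    have h00 : eta e0 e0 = -1 := by
      rw [he0, eta_smul_left, eta_smul_right, hplus]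
      field_simp
      nlinarith [hc2]
    have h11 : eta e1 e1 = 1 := by
      rw [he1, eta_smul_left, eta_smul_right, hminus]
      field_simp
      nlinarith [hσ2]
    have h01 : eta e0 e1 = 0 := by
      rw [he0, he1, eta_smul_left, eta_smul_right, hmix]; ring
    obtain ⟨e2, e3, h22, h33, h02, h03, h12, h13, h23⟩ := tetrad e0 e1 h00 h11 h01
    refine ⟨χ, ![e0, e1, e2, e3], build e0 e1 e2 e3 h00 h11 h22 h33 h01 h02 h03 h12 h13 h23,
      ?_, ?_, ?_⟩
    · show 0 < e0 0
      rw [he0]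
      simp only [Pi.smul_apply, Pi.add_apply, smul_eq_mul]
      positivity
    · rw [hcosh, hsinh, he0, he1]
      funext i
      simp only [Pi.add_apply, Pi.smul_apply, Pi.sub_apply, smul_eq_mul,
        Matrix.cons_val_zero, Matrix.cons_val_one, Matrix.head_cons]
      field_simp
      ring
    · rw [hcosh, hsinh, he0, he1]
      funext i
      simp only [Pi.add_apply, Pi.smul_apply, Pi.sub_apply, smul_eq_mul,
        Matrix.cons_val_zero, Matrix.cons_val_one, Matrix.head_cons]
      field_simp
      ring
end

section
/- Let a ∈ ℂ⁴ (components a₀,a₁,a₂,a₃), b ∈ ℂ, and m ∈ ℝ. Define the real symmetric bilinear form T on ℝ⁴ by T(u, v) := Re( conj(∑_{μ=0}^{3} a_μ u_μ) · (∑_{ν=0}^{3} a_ν v_ν) ) − (1/2)·η(u,v)·( −|a₀|² + |a₁|² + |a₂|² + |a₃|² + m²|b|² ). Then T(u, u′) ≥ 0 for all u, u′ ∈ ℝ⁴ lying in the closed future cone, i.e. whenever η(u,u) ≤ 0, u₀ ≥ 0, η(u′,u′) ≤ 0 and u′₀ ≥ 0. -/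
/-- Reverse Cauchy–Schwarz core: `d ≤ s*t` for the abstract data of two
future-causal vectors. -/
lemma st_ge_d (s t d U U' : ℝ) (hU : 0 ≤ U) (hU' : 0 ≤ U')
    (hs : 0 ≤ s) (ht : 0 ≤ t) (hsU : U ≤ s^2) (htU : U' ≤ t^2)
    (hd : d^2 ≤ U*U') : d ≤ s*t := by
  have h5 : d^2 ≤ s^2*t^2 := le_trans hd (by nlinarith [mul_le_mul hsU htU hU' (sq_nonneg s)])
  nlinarith [h5, mul_nonneg hs ht]

set_option maxHeartbeats 1000000 in
/-- Abstract form of the dominant-energy inequality. -/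
lemma abstract_dec (A R x y d s t U U' : ℝ)
    (hR : 0 ≤ R) (hU : 0 ≤ U) (hU' : 0 ≤ U')
    (hs : 0 ≤ s) (ht : 0 ≤ t)
    (hsU : U ≤ s^2) (htU : U' ≤ t^2)
    (hx : x^2 ≤ R*U) (hy : y^2 ≤ R*U') (hd : d^2 ≤ U*U')
    (hgram : x^2*U' + y^2*U - 2*x*y*d ≤ R*(U*U'-d^2)) :
    0 ≤ (A*s + x)*(A*t + y) - (1/2)*(-(s*t) + d)*(-(A^2) + R) := by
  have h5 : d^2 ≤ s^2*t^2 := le_trans hd (by nlinarith [mul_le_mul hsU htU hU' (sq_nonneg s)])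
  have hstd : 0 ≤ s*t + d := by nlinarith [h5, mul_nonneg hs ht]
  rcases eq_or_lt_of_le hstd with heq | hlt
  · -- degenerate case: d = -s*t
    have hdeq : d = -(s*t) := by linarith
    have hdsq : d^2 = s^2*t^2 := by rw [hdeq]; ring
    have hUU' : s^2*t^2 ≤ U*U' := hdsq ▸ hd
    rcases eq_or_lt_of_le hs with hs0 | hs0
    · have hU0 : U = 0 := le_antisymm (by nlinarith) hU
      have hx0 : x = 0 := by nlinarith [sq_nonneg x]
      have hd0 : d = 0 := by nlinarith [sq_nonneg d]
      rw [hx0, hd0, ← hs0]; norm_num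
    rcases eq_or_lt_of_le ht with ht0 | ht0
    · have hU0 : U' = 0 := le_antisymm (by nlinarith) hU'
      have hy0 : y = 0 := by nlinarith [sq_nonneg y]
      have hd0 : d = 0 := by nlinarith [sq_nonneg d]
      rw [hy0, hd0, ← ht0]; norm_num
    · have hU'eq : U' = t^2 := by
        refine le_antisymm htU ?_
        nlinarith [hUU', mul_nonneg hU' (by linarith : (0:ℝ) ≤ s^2 - U), mul_pos hs0 hs0]
      have hUeq : U = s^2 := by
        refine le_antisymm hsU ?_
        rw [hU'eq] at hUU'
        nlinarith [hUU', mul_pos ht0 ht0]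
      have hxy : t*x + s*y = 0 := by
        rw [hUeq, hU'eq, hdeq] at hgram
        have h2 : (t*x + s*y)^2 ≤ 0 := by nlinarith [hgram]
        have h3 : (t*x + s*y)^2 = 0 := le_antisymm h2 (sq_nonneg _)
        exact pow_eq_zero_iff two_ne_zero |>.mp h3
      have hid : s * ((A*s + x)*(A*t + y) - (1/2)*(-(s*t) + d)*(-(A^2) + R))
          = t*(s^2*R - x^2) := by
        rw [hdeq]; linear_combination (s*A + x) * hxy
      have hRx : 0 ≤ s^2*R - x^2 := by nlinarith
      nlinarith [hid, mul_nonneg ht hRx, hs0]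
  · -- main case: s*t + d > 0
    have hrem : 0 ≤ (s^2*t^2 - d^2)*R - s^2*y^2 - t^2*x^2 + 2*d*x*y := by
      nlinarith [hgram,
        mul_nonneg (by nlinarith : (0:ℝ) ≤ s^2 - U) (by nlinarith : (0:ℝ) ≤ R*U' - y^2),
        mul_nonneg (by nlinarith : (0:ℝ) ≤ t^2 - U') (by nlinarith : (0:ℝ) ≤ R*U - x^2),
        mul_nonneg hR (mul_nonneg (by nlinarith : (0:ℝ) ≤ s^2 - U) (by nlinarith : (0:ℝ) ≤ t^2 - U'))]
    have hid2 : 2*(s*t+d) * ((A*s + x)*(A*t + y) - (1/2)*(-(s*t) + d)*(-(A^2) + R))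
        = ((s*t+d)*A + s*y + t*x)^2
          + ((s^2*t^2 - d^2)*R - s^2*y^2 - t^2*x^2 + 2*d*x*y) := by ring
    nlinarith [sq_nonneg ((s*t+d)*A + s*y + t*x), hrem, hid2, hlt]

set_option maxHeartbeats 1000000 in
/-- The dominant-energy inequality for a single real gradient vector `p`. -/
lemma key_real (p u u' : Fin 4 → ℝ) (hu : eta u u ≤ 0) (hu0 : 0 ≤ u 0)
    (hu' : eta u' u' ≤ 0) (hu'0 : 0 ≤ u' 0) :
    0 ≤ (p 0 * u 0 + p 1 * u 1 + p 2 * u 2 + p 3 * u 3) *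
          (p 0 * u' 0 + p 1 * u' 1 + p 2 * u' 2 + p 3 * u' 3)
        - (1/2) * eta u u' * (-(p 0)^2 + (p 1)^2 + (p 2)^2 + (p 3)^2) := by
  have h := abstract_dec (p 0)
    ((p 1)^2 + (p 2)^2 + (p 3)^2)
    (p 1 * u 1 + p 2 * u 2 + p 3 * u 3)
    (p 1 * u' 1 + p 2 * u' 2 + p 3 * u' 3)
    (u 1 * u' 1 + u 2 * u' 2 + u 3 * u' 3)
    (u 0) (u' 0)
    ((u 1)^2 + (u 2)^2 + (u 3)^2)
    ((u' 1)^2 + (u' 2)^2 + (u' 3)^2)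
    (by positivity) (by positivity) (by positivity) hu0 hu'0
    (by unfold eta at hu; nlinarith)
    (by unfold eta at hu'; nlinarith)
    (by nlinarith [sq_nonneg (p 1 * u 2 - p 2 * u 1), sq_nonneg (p 1 * u 3 - p 3 * u 1),
          sq_nonneg (p 2 * u 3 - p 3 * u 2)])
    (by nlinarith [sq_nonneg (p 1 * u' 2 - p 2 * u' 1), sq_nonneg (p 1 * u' 3 - p 3 * u' 1),
          sq_nonneg (p 2 * u' 3 - p 3 * u' 2)])
    (by nlinarith [sq_nonneg (u 1 * u' 2 - u 2 * u' 1), sq_nonneg (u 1 * u' 3 - u 3 * u' 1),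
          sq_nonneg (u 2 * u' 3 - u 3 * u' 2)])
    (by nlinarith [sq_nonneg (p 1 * (u 2 * u' 3 - u 3 * u' 2) - p 2 * (u 1 * u' 3 - u 3 * u' 1)
          + p 3 * (u 1 * u' 2 - u 2 * u' 1))])
  unfold eta
  linarith [h]

/-- Future-causal vectors have nonpositive Minkowski product. -/
lemma eta_nonpos (u u' : Fin 4 → ℝ) (hu : eta u u ≤ 0) (hu0 : 0 ≤ u 0)
    (hu' : eta u' u' ≤ 0) (hu'0 : 0 ≤ u' 0) : eta u u' ≤ 0 := by
  have h := st_ge_d (u 0) (u' 0)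
    (u 1 * u' 1 + u 2 * u' 2 + u 3 * u' 3)
    ((u 1)^2 + (u 2)^2 + (u 3)^2)
    ((u' 1)^2 + (u' 2)^2 + (u' 3)^2)
    (by positivity) (by positivity) hu0 hu'0
    (by unfold eta at hu; nlinarith)
    (by unfold eta at hu'; nlinarith)
    (by nlinarith [sq_nonneg (u 1 * u' 2 - u 2 * u' 1), sq_nonneg (u 1 * u' 3 - u 3 * u' 1),
          sq_nonneg (u 2 * u' 3 - u 3 * u' 2)])
  unfold eta
  linarith [h]

set_option maxHeartbeats 1000000 in
/-- The pointwise dominant-energy inequality for the Klein–Gordon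
stress-energy tensor: for `a ∈ ℂ⁴`, `b ∈ ℂ` and `m ∈ ℝ`, the bilinear form
`T(u,v) = Re(conj(a·u)(a·v)) − ½ η(u,v)(−|a₀|² + |a₁|² + |a₂|² + |a₃|² + m²|b|²)`
satisfies `T(u, u′) ≥ 0` whenever `u, u′` lie in the closed future cone. -/
theorem stmt_5 (a : Fin 4 → ℂ) (b : ℂ) (m : ℝ) :
    ∀ u u' : Fin 4 → ℝ,
      eta u u ≤ 0 → 0 ≤ u 0 → eta u' u' ≤ 0 → 0 ≤ u' 0 →
      0 ≤ ((starRingEnd ℂ) (∑ μ, a μ * (u μ : ℂ)) * (∑ ν, a ν * (u' ν : ℂ))).re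
          - (1 / 2) * eta u u' *
            (-‖a 0‖ ^ 2 + ‖a 1‖ ^ 2 + ‖a 2‖ ^ 2 + ‖a 3‖ ^ 2 + m ^ 2 * ‖b‖ ^ 2) := by
  intro u u' hu hu0 hu' hu'0
  have h1 := key_real (fun μ => (a μ).re) u u' hu hu0 hu' hu'0
  have h2 := key_real (fun μ => (a μ).im) u u' hu hu0 hu' hu'0
  have h3 : 0 ≤ -(1/2) * eta u u' * (m^2 * (b.re * b.re + b.im * b.im)) := by
    have he := eta_nonpos u u' hu hu0 hu' hu'0
    have hb : (0:ℝ) ≤ m^2 * (b.re * b.re + b.im * b.im) := by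
      have := mul_self_nonneg b.re
      have := mul_self_nonneg b.im
      positivity
    nlinarith [he, hb]
  simp only [Fin.sum_univ_four, map_add, map_mul, Complex.conj_ofReal,
    Complex.add_re, Complex.add_im, Complex.mul_re, Complex.mul_im,
    Complex.conj_re, Complex.conj_im, Complex.ofReal_re, Complex.ofReal_im,
    Complex.sq_norm, Complex.normSq_apply]
  linarith [h1, h2, h3]
end

section
/- Define Q₃ : [1, ∞) → ℝ by Q₃(x) := (1 − 1/x²)^{1/2}·(1 − 1/(2x²)) − (1/(2x⁴))·ln(x + √(x² − 1)). Then Q₃(1) = 0; Q₃ is strictly increasing on [1, ∞); 0 ≤ Q₃(x) < 1 for every x ≥ 1; and Q₃(x) → 1 as x → ∞. -/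
/-- `Q₃(x) = (1 − 1/x²)^{1/2}·(1 − 1/(2x²)) − (1/(2x⁴))·ln(x + √(x² − 1))`. -/
noncomputable def Q3 (x : ℝ) : ℝ :=
  Real.sqrt (1 - 1 / x ^ 2) * (1 - 1 / (2 * x ^ 2)) -
    (1 / (2 * x ^ 4)) * Real.log (x + Real.sqrt (x ^ 2 - 1))

open Real Filter in
private lemma hQ3deriv (x : ℝ) (hx : 1 < x) :
    HasDerivAt Q3 (2 * Real.sqrt (x^2 - 1) / x^4
      + 2 * Real.log (x + Real.sqrt (x^2 - 1)) / x^5) x := by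
  have hx0 : (0:ℝ) < x := lt_trans one_pos hx
  have hx0' : x ≠ 0 := hx0.ne'
  set r := Real.sqrt (x^2 - 1) with hrdef
  have hr2 : r ^ 2 = x^2 - 1 := Real.sq_sqrt (by nlinarith)
  have hrpos : 0 < r := Real.sqrt_pos.mpr (by nlinarith)
  have hs : Real.sqrt (1 - 1 / x^2) = r / x := by
    rw [show 1 - 1/x^2 = (x^2 - 1)/x^2 by field_simp]
    rw [Real.sqrt_div (by nlinarith) (x^2), Real.sqrt_sq hx0.le]
  have hApos : (0:ℝ) < 1 - 1 / x^2 := by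
    rw [show 1 - 1/x^2 = (x^2 - 1)/x^2 by field_simp]
    exact div_pos (by nlinarith) (by positivity)
  have hxr : (0:ℝ) < x + r := by positivity
  have hA : HasDerivAt (fun y : ℝ => 1 - 1 / y^2) (2 / x^3) x := by
    have h := ((hasDerivAt_const x (1:ℝ)).div (hasDerivAt_pow 2 x)
      (pow_ne_zero 2 hx0')).const_sub 1
    refine h.congr_deriv ?_
    field_simp; ring
  have hB : HasDerivAt (fun y : ℝ => 1 - 1 / (2 * y^2)) (1 / x^3) x := by
    have h := ((hasDerivAt_const x (1:ℝ)).div ((hasDerivAt_pow 2 x).const_mul 2)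
      (by positivity)).const_sub 1
    refine h.congr_deriv ?_
    field_simp; ring
  have hsqA : HasDerivAt (fun y : ℝ => Real.sqrt (1 - 1 / y^2))
      ((2 / x^3) / (2 * Real.sqrt (1 - 1 / x^2))) x := hA.sqrt hApos.ne'
  have hfirst := hsqA.mul hB
  have hC : HasDerivAt (fun y : ℝ => y^2 - 1) (2 * x) x := by
    simpa using (hasDerivAt_pow 2 x).sub_const 1
  have hsqC : HasDerivAt (fun y : ℝ => Real.sqrt (y^2 - 1))
      ((2 * x) / (2 * r)) x := hC.sqrt (by nlinarith)
  have hg : HasDerivAt (fun y : ℝ => y + Real.sqrt (y^2 - 1))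
      (1 + (2 * x) / (2 * r)) x := (hasDerivAt_id x).add hsqC
  have hlog : HasDerivAt (fun y : ℝ => Real.log (y + Real.sqrt (y^2 - 1)))
      ((1 + (2 * x) / (2 * r)) / (x + r)) x := hg.log hxr.ne'
  have hE : HasDerivAt (fun y : ℝ => 1 / (2 * y^4)) (-2 / x^5) x := by
    have h := (hasDerivAt_const x (1:ℝ)).div ((hasDerivAt_pow 4 x).const_mul 2)
      (by positivity)
    refine h.congr_deriv ?_
    field_simp; ring
  have hsecond := hE.mul hlog
  have hD := hfirst.sub hsecond
  refine hD.congr_deriv ?_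
  rw [hs]
  field_simp
  rw [← hrdef]
  linear_combination (-2 * x * (x + r)) * hr2
open Real Filter in
private lemma Q3_one : Q3 1 = 0 := by
  simp [Q3]

open Real Filter in
private lemma Q3_cont : ContinuousOn Q3 (Set.Ici 1) := by
  have hx0 : ∀ x ∈ Set.Ici (1:ℝ), x ≠ 0 := fun x hx => by
    have : (1:ℝ) ≤ x := hx; positivity
  apply ContinuousOn.sub
  · apply ContinuousOn.mul
    · exact (continuousOn_const.sub (continuousOn_const.div
        (by fun_prop) (fun x hx => pow_ne_zero 2 (hx0 x hx)))).sqrt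
    · exact continuousOn_const.sub (continuousOn_const.div
        (by fun_prop) (fun x hx => by have : (1:ℝ) ≤ x := hx; positivity))
  · apply ContinuousOn.mul
    · exact continuousOn_const.div (by fun_prop)
        (fun x hx => by have : (1:ℝ) ≤ x := hx; positivity)
    · apply ContinuousOn.log
      · exact continuousOn_id.add ((by fun_prop : ContinuousOn (fun x : ℝ => x^2-1) _).sqrt)
      · intro x hx
        have h1 : (1:ℝ) ≤ x := hx
        have : 0 ≤ Real.sqrt (x^2-1) := Real.sqrt_nonneg _
        nlinarith

open Real Filter in
private lemma Q3_mono : StrictMonoOn Q3 (Set.Ici 1) := by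
  apply StrictMonoOn.mono (s := Set.Ici (1:ℝ))
    (strictMonoOn_of_deriv_pos (convex_Ici 1) Q3_cont ?_) le_rfl
  intro x hx
  rw [interior_Ici] at hx
  have hx1 : (1:ℝ) < x := hx
  have h := hQ3deriv x hx1
  rw [h.deriv]
  have hrpos : 0 < Real.sqrt (x^2-1) := Real.sqrt_pos.mpr (by nlinarith)
  have hL : 0 ≤ Real.log (x + Real.sqrt (x^2-1)) :=
    Real.log_nonneg (by nlinarith)
  have hx0 : (0:ℝ) < x := by linarith
  positivity

open Real Filter

/-- `Q₃(1) = 0`, `Q₃` is strictly increasing on `[1, ∞)`,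
`0 ≤ Q₃(x) < 1` for all `x ≥ 1`, and `Q₃(x) → 1` as `x → ∞`. -/
theorem stmt_6 :
    Q3 1 = 0 ∧ StrictMonoOn Q3 (Set.Ici 1) ∧
    (∀ x : ℝ, 1 ≤ x → 0 ≤ Q3 x ∧ Q3 x < 1) ∧
    Filter.Tendsto Q3 Filter.atTop (nhds 1) := by

  refine ⟨Q3_one, Q3_mono, fun x hx => ⟨?_, ?_⟩, ?_⟩
  · have := Q3_mono.monotoneOn (Set.self_mem_Ici) hx hx
    rw [Q3_one] at this; exact this
  · have hx0 : (0:ℝ) < x := lt_of_lt_of_le one_pos hx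
    have hL : 0 ≤ Real.log (x + Real.sqrt (x^2-1)) :=
      Real.log_nonneg (by nlinarith [Real.sqrt_nonneg (x^2-1)])
    have hs1 : Real.sqrt (1 - 1/x^2) ≤ 1 := by
      apply Real.sqrt_le_one.mpr
      have : 0 < 1/x^2 := by positivity
      linarith
    have hb : 1 - 1/(2*x^2) < 1 := by
      have : 0 < 1/(2*x^2) := by positivity
      linarith
    have hbnn : 0 ≤ 1 - 1/(2*x^2) := by
      have h2 : 1/(2*x^2) ≤ 1/2 := by
        rw [div_le_div_iff₀ (by positivity) (by norm_num)]
        nlinarith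
      linarith
    have ht : 0 ≤ (1/(2*x^4)) * Real.log (x + Real.sqrt (x^2-1)) := by positivity
    calc Q3 x ≤ Real.sqrt (1 - 1/x^2) * (1 - 1/(2*x^2)) :=
          sub_le_self _ ht
      _ ≤ 1 * (1 - 1/(2*x^2)) := mul_le_mul_of_nonneg_right hs1 hbnn
      _ < 1 := by linarith
  · have h1 : Tendsto (fun x : ℝ => 1 - 1/x^2) atTop (nhds 1) := by
      have h : Tendsto (fun x : ℝ => x^2) atTop atTop := tendsto_pow_atTop (by norm_num)
      have := h.inv_tendsto_atTop
      simpa [one_div] using tendsto_const_nhds.sub this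
    have hsq : Tendsto (fun x : ℝ => Real.sqrt (1 - 1/x^2)) atTop (nhds 1) := by
      have := (Real.continuous_sqrt.tendsto 1).comp h1
      simpa [Function.comp_def] using this
    have hpow : Tendsto (fun x : ℝ => x^2) atTop atTop := tendsto_pow_atTop (by norm_num)
    have hinv : Tendsto (fun x : ℝ => (x^2)⁻¹) atTop (nhds 0) := hpow.inv_tendsto_atTop
    have h2 : Tendsto (fun x : ℝ => 1 - 1/(2*x^2)) atTop (nhds 1) := by
      have := (tendsto_const_nhds (x := (1:ℝ)) (f := atTop)).sub (hinv.const_mul (2⁻¹ : ℝ))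
      simpa [one_div, mul_inv, mul_comm] using this
    have hmul : Tendsto (fun x : ℝ => Real.sqrt (1 - 1/x^2) * (1 - 1/(2*x^2)))
        atTop (nhds 1) := by
      simpa using hsq.mul h2
    have hlog0 : Tendsto (fun x : ℝ => (1/(2*x^4)) * Real.log (x + Real.sqrt (x^2-1)))
        atTop (nhds 0) := by
      apply squeeze_zero' (g := fun x : ℝ => 1/x^3)
      · filter_upwards [eventually_ge_atTop (1:ℝ)] with x hx
        have hx0 : (0:ℝ) < x := lt_of_lt_of_le one_pos hx
        have hL : 0 ≤ Real.log (x + Real.sqrt (x^2-1)) :=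
          Real.log_nonneg (by nlinarith [Real.sqrt_nonneg (x^2-1)])
        positivity
      · filter_upwards [eventually_ge_atTop (1:ℝ)] with x hx
        have hx0 : (0:ℝ) < x := lt_of_lt_of_le one_pos hx
        have hr : Real.sqrt (x^2-1) ≤ x := by
          have h := Real.sqrt_le_sqrt (show x^2-1 ≤ x^2 by nlinarith)
          rwa [Real.sqrt_sq hx0.le] at h
        have hxr : 0 < x + Real.sqrt (x^2-1) := by
          nlinarith [Real.sqrt_nonneg (x^2-1)]
        have hL2 : Real.log (x + Real.sqrt (x^2-1)) ≤ 2*x := by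
          calc Real.log (x + Real.sqrt (x^2-1)) ≤ (x + Real.sqrt (x^2-1)) - 1 :=
                Real.log_le_sub_one_of_pos hxr
            _ ≤ 2*x := by linarith
        calc (1/(2*x^4)) * Real.log (x + Real.sqrt (x^2-1))
            ≤ (1/(2*x^4)) * (2*x) := by
              apply mul_le_mul_of_nonneg_left hL2 (by positivity)
          _ = 1/x^3 := by field_simp
      · have h : Tendsto (fun x : ℝ => x^3) atTop atTop := tendsto_pow_atTop (by norm_num)
        simpa [one_div, Pi.inv_def] using h.inv_tendsto_atTop
    have h := hmul.sub hlog0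
    rw [sub_zero] at h
    exact h
end
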